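/- Let n ≥ 2 and let P be the path with vertices v_1, …, v_n (edges v_i v_{i+1}). Let L be a list assignment of subsets of ZMod 7 such that L(v_1) is an interval of ZMod 7 with |L(v_1)| ≥ 2, L(v_n) is an interval of ZMod 7 with |L(v_n)| ≥ 3, and L(v_i) is a 4-interval for every internal vertex (1 < i < n). Then P admits an L-(7,2)-colouring. -/

import Mathlib

/-!
Colour the path greedily from `v_1`, keeping track of the colours the current vertex can take
in an `L`-colouring of the path up to it. In `G_{7,2}` a colour `x` is non-adjacent only to
`x - 1`, `x`, `x + 1`, so at most two colours are adjacent to neither of two distinct colours.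
Hence, once two colours are available at a vertex, a `4`-interval at the next vertex
still offers two of them, and a `3`-interval at the last vertex offers at least one.
-/

open SimpleGraph

/-- The circular clique `G_{p,q}` on vertex set `ZMod p`. -/
def circClique (p q : ℕ) : SimpleGraph (ZMod p) where
  Adj i j := i ≠ j ∧ (q ≤ (i - j).val ∧ (i - j).val ≤ p - q)
    ∧ (q ≤ (j - i).val ∧ (j - i).val ≤ p - q)
  symm := ⟨fun _ _ ⟨h, h1, h2⟩ => ⟨h.symm, h2, h1⟩⟩
  loopless := ⟨fun _ h => h.1 rfl⟩

/-- `G` admits a `(p,q)`-circular colouring. -/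
def HasCircColoring {V : Type*} (G : SimpleGraph V) (p q : ℕ) : Prop :=
  Nonempty (G →g circClique p q)

/-- A graph is 4-critical. -/
def FourCritical {V : Type*} (G : SimpleGraph V) : Prop :=
  ¬ G.Colorable 3 ∧ ∀ e ∈ G.edgeSet, (G.deleteEdges {e}).Colorable 3

/-- The wheel on `n` vertices: a cycle on `n-1` vertices plus a hub. -/
def wheel (n : ℕ) : SimpleGraph (Option (Fin (n - 1))) where
  Adj u v := match u, v with
    | none, none => False
    | none, some _ => True
    | some _, none => True
    | some i, some j => (cycleGraph (n - 1)).Adj i j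
  symm := by constructor; rintro (_|i) (_|j) h <;> simp_all <;> exact h.symm
  loopless := by constructor; rintro (_|i) h <;> simp_all

/-- The interval `{a, a+1, …, a+s-1}` of colours in `ZMod 7`. -/
def circInterval (a : ZMod 7) (s : ℕ) : Set (ZMod 7) :=
  {x | ∃ i : ℕ, i < s ∧ x = a + (i : ZMod 7)}

lemma mem_circInterval_iff {a x : ZMod 7} {s : ℕ} :
    x ∈ circInterval a s ↔ (x - a).val < s := by
  constructor
  · rintro ⟨i, hi, rfl⟩
    rw [add_sub_cancel_left, ZMod.val_natCast]
    exact (Nat.mod_le i 7).trans_lt hi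
  · intro h
    exact ⟨(x - a).val, h, by rw [ZMod.natCast_zmod_val, add_sub_cancel]⟩

lemma circInterval_mono {a : ZMod 7} {s t : ℕ} (h : s ≤ t) :
    circInterval a s ⊆ circInterval a t :=
  fun _ ⟨i, hi, hx⟩ => ⟨i, hi.trans_le h, hx⟩

lemma nontrivial_circInterval_two (a : ZMod 7) : (circInterval a 2).Nontrivial :=
  ⟨a, ⟨0, two_pos, by simp⟩, a + 1, ⟨1, one_lt_two, by simp⟩,
    by simpa using (by decide : (1 : ZMod 7) ≠ 0)⟩

instance (a : ZMod 7) (s : ℕ) : DecidablePred (· ∈ circInterval a s) :=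
  fun _ => decidable_of_iff _ mem_circInterval_iff.symm

instance : DecidableRel (circClique 7 2).Adj :=
  fun _ _ => inferInstanceAs (Decidable (_ ∧ _ ∧ _))

lemma exists_ne_mem_circInterval_four_adj_or_adj : ∀ x x' a : ZMod 7, x ≠ x' →
    ∃ y ∈ circInterval a 4, ∃ z ∈ circInterval a 4, y ≠ z ∧
      ((circClique 7 2).Adj x y ∨ (circClique 7 2).Adj x' y) ∧
      ((circClique 7 2).Adj x z ∨ (circClique 7 2).Adj x' z) := by
  decide

lemma exists_mem_circInterval_three_adj_or_adj : ∀ x x' a : ZMod 7, x ≠ x' →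
    ∃ y ∈ circInterval a 3, (circClique 7 2).Adj x y ∨ (circClique 7 2).Adj x' y := by
  decide

section EndColours

variable {α : Type*} (H : SimpleGraph α) (L : ℕ → Set α)

def endColours (m : ℕ) : Set α :=
  {x | ∃ f : ℕ → α, f m = x ∧ (∀ j ≤ m, f j ∈ L j) ∧
    ∀ j < m, H.Adj (f j) (f (j + 1))}

variable {H L}

lemma endColours_zero : endColours H L 0 = L 0 := by
  ext x
  constructor
  · rintro ⟨f, rfl, hf, -⟩
    exact hf 0 le_rfl
  · intro hx
    exact ⟨fun _ => x, rfl, fun j hj => by rwa [Nat.le_zero.1 hj],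
      fun j hj => absurd hj j.not_lt_zero⟩

lemma mem_endColours_succ {m : ℕ} {x y : α} (hx : x ∈ endColours H L m) (hxy : H.Adj x y)
    (hy : y ∈ L (m + 1)) : y ∈ endColours H L (m + 1) := by
  obtain ⟨f, rfl, hfL, hfH⟩ := hx
  refine ⟨Function.update f (m + 1) y, by simp, fun j hj => ?_, fun j hj => ?_⟩
  · rcases hj.lt_or_eq with hj | rfl
    · rw [Function.update_of_ne (by omega)]
      exact hfL j (by omega)
    · simpa using hy
  · rw [Function.update_of_ne (by omega)]
    rcases (Nat.lt_succ_iff.1 hj).lt_or_eq with hj | rfl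
    · rw [Function.update_of_ne (by omega)]
      exact hfH j hj
    · simpa using hxy

lemma exists_pathGraph_coloring_of_nonempty_endColours {n : ℕ}
    (h : (endColours H L (n - 1)).Nonempty) :
    ∃ f : Fin n → α, (∀ v : Fin n, f v ∈ L v) ∧
      ∀ u v, (pathGraph n).Adj u v → H.Adj (f u) (f v) := by
  obtain ⟨-, f, -, hfL, hfH⟩ := h
  refine ⟨fun v => f v, fun v => hfL v (by omega), fun u v huv => ?_⟩
  rcases pathGraph_adj.1 huv with huv | huv
  · simpa [← huv] using hfH u (by omega)
  · simpa [← huv] using (hfH v (by omega)).symm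

end EndColours

section CircCliqueSevenTwo

variable {L : ℕ → Set (ZMod 7)}

lemma nontrivial_endColours_succ {m : ℕ} (hS : (endColours (circClique 7 2) L m).Nontrivial)
    (hL : ∃ a, circInterval a 4 ⊆ L (m + 1)) :
    (endColours (circClique 7 2) L (m + 1)).Nontrivial := by
  obtain ⟨x, hx, x', hx', hne⟩ := hS
  obtain ⟨a, ha⟩ := hL
  obtain ⟨y, hy, z, hz, hyz, hxy, hxz⟩ :=
    exists_ne_mem_circInterval_four_adj_or_adj x x' a hne
  refine ⟨y, ?_, z, ?_, hyz⟩
  · rcases hxy with h | h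
    exacts [mem_endColours_succ hx h (ha hy), mem_endColours_succ hx' h (ha hy)]
  · rcases hxz with h | h
    exacts [mem_endColours_succ hx h (ha hz), mem_endColours_succ hx' h (ha hz)]

lemma nontrivial_endColours (hfirst : ∃ a, circInterval a 2 ⊆ L 0) (m : ℕ)
    (hmid : ∀ j, 0 < j → j ≤ m → ∃ a, circInterval a 4 ⊆ L j) :
    (endColours (circClique 7 2) L m).Nontrivial := by
  induction m with
  | zero =>
    obtain ⟨a, ha⟩ := hfirst
    rw [endColours_zero]
    exact (nontrivial_circInterval_two a).mono ha
  | succ m ih =>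
    exact nontrivial_endColours_succ (ih fun j hj hjm => hmid j hj (by omega))
      (hmid (m + 1) m.succ_pos le_rfl)

lemma nonempty_endColours_succ {m : ℕ} (hS : (endColours (circClique 7 2) L m).Nontrivial)
    (hL : ∃ a, circInterval a 3 ⊆ L (m + 1)) :
    (endColours (circClique 7 2) L (m + 1)).Nonempty := by
  obtain ⟨x, hx, x', hx', hne⟩ := hS
  obtain ⟨a, ha⟩ := hL
  obtain ⟨y, hy, hxy⟩ := exists_mem_circInterval_three_adj_or_adj x x' a hne
  rcases hxy with h | h
  exacts [⟨y, mem_endColours_succ hx h (ha hy)⟩, ⟨y, mem_endColours_succ hx' h (ha hy)⟩]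

end CircCliqueSevenTwo

/-- A path whose first vertex has an interval list of size ≥ 2, last vertex an interval
list of size ≥ 3, and internal vertices 4-interval lists, admits a list
`(7,2)`-colouring. -/
theorem stmt_11 (n : ℕ) (hn : 2 ≤ n) (L : Fin n → Set (ZMod 7))
    (hfirst : ∃ (a : ZMod 7) (s : ℕ), 2 ≤ s ∧ L ⟨0, by omega⟩ = circInterval a s)
    (hlast : ∃ (a : ZMod 7) (s : ℕ), 3 ≤ s ∧ L ⟨n - 1, by omega⟩ = circInterval a s)
    (hinternal : ∀ i : Fin n, (i : ℕ) ≠ 0 → (i : ℕ) ≠ n - 1 →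
      ∃ a : ZMod 7, L i = circInterval a 4) :
    ∃ f : Fin n → ZMod 7, (∀ v, f v ∈ L v) ∧
      ∀ u v, (pathGraph n).Adj u v → (circClique 7 2).Adj (f u) (f v) := by
  let L' : ℕ → Set (ZMod 7) := fun j => if h : j < n then L ⟨j, h⟩ else ∅
  have hL' (j : ℕ) (h : j < n) : L' j = L ⟨j, h⟩ := dif_pos h
  have hL'first : ∃ a, circInterval a 2 ⊆ L' 0 := by
    obtain ⟨a, s, hs, ha⟩ := hfirst
    exact ⟨a, by rw [hL' 0 (by omega), ha]; exact circInterval_mono hs⟩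
  have hL'internal (j : ℕ) (hj : 0 < j) (hjn : j ≤ n - 2) :
      ∃ a, circInterval a 4 ⊆ L' j := by
    obtain ⟨a, ha⟩ := hinternal ⟨j, by omega⟩ hj.ne' (show j ≠ n - 1 by omega)
    exact ⟨a, by rw [hL' j (by omega), ha]⟩
  have hL'last : ∃ a, circInterval a 3 ⊆ L' (n - 2 + 1) := by
    obtain ⟨a, s, hs, ha⟩ := hlast
    rw [show n - 2 + 1 = n - 1 by omega, hL' _ (by omega), ha]
    exact ⟨a, circInterval_mono hs⟩
  have hcolourable : (endColours (circClique 7 2) L' (n - 1)).Nonempty := by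
    rw [show n - 1 = n - 2 + 1 by omega]
    exact nonempty_endColours_succ (nontrivial_endColours hL'first (n - 2) hL'internal) hL'last
  obtain ⟨f, hfL, hfH⟩ := exists_pathGraph_coloring_of_nonempty_endColours hcolourable
  exact ⟨f, fun v => by simpa [hL' v v.isLt] using hfL v, hfH⟩
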